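/- arXiv:2310.08324 — 8 statements merged into one kernel-verified Lean document; each statement's English description precedes it below -/
import Mathlib

section
/- Let P : Cᵒᵖ → Pos be a primary doctrine, X an object of C and φ ∈ P(X). Define the endofunctor K = X×− : C → C, the natural transformations ε with ε_A = pr₂ : X×A → A and γ with γ_A = ⟨pr₁, id_{X×A}⟩ : X×A → X×(X×A), and for each object A the monotone map 𝔣_A : P(A) → P(X×A), 𝔣_A(α) = P(pr₁)(φ) ∧ P(pr₂)(α). Then: (i) (K, γ, ε) is a comonad on C (γ and ε satisfy the counit laws K(ε)∘γ = id = ε_K∘γ and the coassociativity law K(γ)∘γ = γ_K∘γ); (ii) 𝔣 is a natural transformation P ⟶ P ∘ Kᵒᵖ; (iii) for every object A and every α ∈ P(A), 𝔣_A(α) ≤ P(ε_A)(α) and 𝔣_A(α) ≤ P(γ_A)(𝔣_{X×A}(𝔣_A(α))). (That is, (P, (K,𝔣), γ, ε) is a comonad in the 2-category of indexed posets.) -/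
open CategoryTheory CategoryTheory.Limits

universe w v u

/-- A primary doctrine: a functor `Cᵒᵖ → Pos` (given by the fibers `obj` together with the
monotone reindexing maps `map`) on a category `C` with finite products, such that every fiber
is an inf-semilattice with a top element and every reindexing preserves binary meets and top. -/
structure PrimaryDoctrine (C : Type u) [Category.{v} C] where
  obj : C → Type w
  [sl : ∀ A, SemilatticeInf (obj A)]
  [tp : ∀ A, OrderTop (obj A)]
  map : ∀ {A B : C}, (A ⟶ B) → obj B → obj A
  map_id : ∀ (A : C) (α : obj A), map (𝟙 A) α = α
  map_comp : ∀ {A B D : C} (f : A ⟶ B) (g : B ⟶ D) (α : obj D),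
      map (f ≫ g) α = map f (map g α)
  map_inf : ∀ {A B : C} (f : A ⟶ B) (α β : obj B), map f (α ⊓ β) = map f α ⊓ map f β
  map_top : ∀ {A B : C} (f : A ⟶ B), map f (⊤ : obj B) = ⊤

attribute [instance] PrimaryDoctrine.sl PrimaryDoctrine.tp

/-- The component at `A` of the natural transformation `𝔣 : P ⟶ P ∘ (X × -)ᵒᵖ`,
`𝔣_A(α) = P(pr₁)(φ) ⊓ P(pr₂)(α)`. -/
noncomputable def PrimaryDoctrine.frak {C : Type u} [Category.{v} C] [HasFiniteProducts C]
    (P : PrimaryDoctrine.{w} C) {X : C} (φ : P.obj X) (A : C) (α : P.obj A) :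
    P.obj (X ⨯ A) :=
  P.map prod.fst φ ⊓ P.map prod.snd α

section ProductComonad

variable {C : Type u} [Category.{v} C] [HasBinaryProducts C] (X : C)

theorem prod_lift_fst_id_naturality {A B : C} (f : A ⟶ B) :
    prod.map (𝟙 X) f ≫ prod.lift prod.fst (𝟙 (X ⨯ B))
      = prod.lift prod.fst (𝟙 (X ⨯ A)) ≫ prod.map (𝟙 X) (prod.map (𝟙 X) f) := by
  ext <;> simp

theorem prod_lift_fst_id_comp_map_snd (A : C) :
    prod.lift prod.fst (𝟙 (X ⨯ A)) ≫ prod.map (𝟙 X) prod.snd = 𝟙 (X ⨯ A) := by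
  ext <;> simp

theorem prod_lift_fst_id_coassoc (A : C) :
    prod.lift prod.fst (𝟙 (X ⨯ A)) ≫ prod.map (𝟙 X) (prod.lift prod.fst (𝟙 (X ⨯ A)))
      = prod.lift prod.fst (𝟙 (X ⨯ A)) ≫ prod.lift prod.fst (𝟙 (X ⨯ (X ⨯ A))) := by
  simp only [prod.comp_lift, prod.lift_map, Category.comp_id, prod.lift_fst, Category.id_comp]

end ProductComonad

namespace PrimaryDoctrine

variable {C : Type u} [Category.{v} C] (P : PrimaryDoctrine.{w} C)

theorem map_monotone {A B : C} (f : A ⟶ B) : Monotone (P.map f) := fun α β h => by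
  rw [← inf_eq_left.2 h, P.map_inf]
  exact inf_le_right

variable [HasFiniteProducts C] {X : C} (φ : P.obj X)

theorem frak_monotone (A : C) : Monotone (P.frak φ A) :=
  fun _ _ h => inf_le_inf_left _ (P.map_monotone _ h)

theorem frak_map {A B : C} (f : A ⟶ B) (α : P.obj B) :
    P.frak φ A (P.map f α) = P.map (prod.map (𝟙 X) f) (P.frak φ B α) := by
  simp only [frak, P.map_inf, ← P.map_comp, prod.map_fst, prod.map_snd, Category.comp_id]

theorem frak_le_map_snd (A : C) (α : P.obj A) : P.frak φ A α ≤ P.map prod.snd α :=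
  inf_le_right

theorem frak_le_map_lift_fst_id (A : C) (α : P.obj A) :
    P.frak φ A α
      ≤ P.map (prod.lift prod.fst (𝟙 (X ⨯ A))) (P.frak φ (X ⨯ A) (P.frak φ A α)) := by
  -- `γ` copies the `X`-component, so reindexing along it only duplicates the conjunct `P(pr₁)φ`
  simp only [frak, P.map_inf, ← P.map_comp, ← Category.assoc, prod.lift_fst, prod.lift_snd,
    Category.id_comp]
  exact le_inf inf_le_left le_rfl

end PrimaryDoctrine

/-- For a primary doctrine `P : Cᵒᵖ → Pos`, an object `X` of `C` and
`φ ∈ P(X)`, the endofunctor `K = X × -` together with `ε_A = pr₂`,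
`γ_A = ⟨pr₁, id_{X×A}⟩` and `𝔣_A(α) = P(pr₁)(φ) ⊓ P(pr₂)(α)` constitutes a comonad
`(P, (K, 𝔣), γ, ε)` in the 2-category of indexed posets. -/
theorem comonad_on_indexed_poset {C : Type u} [Category.{v} C] [HasFiniteProducts C]
    (P : PrimaryDoctrine.{w} C) (X : C) (φ : P.obj X) :
    -- (i) `(X × -, γ, ε)` is a comonad on `C`:
    -- naturality of `ε`
    (∀ {A B : C} (f : A ⟶ B),
      prod.map (𝟙 X) f ≫ (prod.snd : X ⨯ B ⟶ B) = (prod.snd : X ⨯ A ⟶ A) ≫ f) ∧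
    -- naturality of `γ`
    (∀ {A B : C} (f : A ⟶ B),
      prod.map (𝟙 X) f ≫ prod.lift prod.fst (𝟙 (X ⨯ B))
        = prod.lift prod.fst (𝟙 (X ⨯ A)) ≫ prod.map (𝟙 X) (prod.map (𝟙 X) f)) ∧
    -- counit law `K(ε) ∘ γ = id`
    (∀ A : C, prod.lift prod.fst (𝟙 (X ⨯ A)) ≫ prod.map (𝟙 X) prod.snd = 𝟙 (X ⨯ A)) ∧
    -- counit law `ε_K ∘ γ = id`
    (∀ A : C,
      prod.lift prod.fst (𝟙 (X ⨯ A)) ≫ (prod.snd : X ⨯ (X ⨯ A) ⟶ X ⨯ A) = 𝟙 (X ⨯ A)) ∧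
    -- coassociativity `K(γ) ∘ γ = γ_K ∘ γ`
    (∀ A : C,
      prod.lift prod.fst (𝟙 (X ⨯ A)) ≫ prod.map (𝟙 X) (prod.lift prod.fst (𝟙 (X ⨯ A)))
        = prod.lift prod.fst (𝟙 (X ⨯ A)) ≫ prod.lift prod.fst (𝟙 (X ⨯ (X ⨯ A)))) ∧
    -- (ii) `𝔣` is a natural transformation `P ⟶ P ∘ Kᵒᵖ`:
    (∀ A : C, Monotone (P.frak φ A)) ∧
    (∀ {A B : C} (f : A ⟶ B) (α : P.obj B),
      P.frak φ A (P.map f α) = P.map (prod.map (𝟙 X) f) (P.frak φ B α)) ∧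
    -- (iii) `ε` and `γ` are 2-arrows:
    (∀ (A : C) (α : P.obj A), P.frak φ A α ≤ P.map (prod.snd : X ⨯ A ⟶ A) α) ∧
    (∀ (A : C) (α : P.obj A),
      P.frak φ A α
        ≤ P.map (prod.lift prod.fst (𝟙 (X ⨯ A))) (P.frak φ (X ⨯ A) (P.frak φ A α))) :=
  ⟨fun f => prod.map_snd _ f, fun f => prod_lift_fst_id_naturality X f,
    prod_lift_fst_id_comp_map_snd X, fun _ => prod.lift_snd _ _, prod_lift_fst_id_coassoc X,
    P.frak_monotone φ, fun f α => P.frak_map φ f α, P.frak_le_map_snd φ,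
    P.frak_le_map_lift_fst_id φ⟩
end

section
/- Let C be a cartesian closed category and X an object of C. Then the coKleisli category C_X of the reader comonad X×− is cartesian closed, and the cofree functor F_X : C → C_X preserves exponentials: for objects A, Y the C-exponential A^Y is an exponential of A by Y in C_X, with evaluation A^Y × Y ⇝ A given by the C-morphism X×(A^Y×Y) → A corresponding under the exponential adjunction of C to pr₂ : X×A^Y → A^Y, and for every g : B×Y ⇝ A the coKleisli transpose B ⇝ A^Y is the C-exponential transpose of g : (X×B)×Y → A. -/
open CategoryTheory CategoryTheory.Limits

universe w v u

section CoKl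

variable (C : Type u) [Category.{v} C] [HasFiniteProducts C]

/-- The coKleisli category of the reader comonad `X × -` on `C`: objects are those of `C`,
morphisms `A ⇝ B` are `C`-morphisms `X ⨯ A ⟶ B`, the identity of `A` is `pr₂` and the
composite of `g : A ⇝ B` and `h : B ⇝ C` is `h ∘ ⟨pr₁, g⟩`. -/
def CoKl (X : C) : Type u := C

variable {C}

/-- Regard an object of `C` as an object of the coKleisli category `CoKl C X`. -/
def CoKl.mk (X A : C) : CoKl C X := A

noncomputable instance CoKl.category (X : C) : Category.{v} (CoKl C X) where
  Hom A B := (X ⨯ (A : C)) ⟶ (B : C)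
  id A := (prod.snd : X ⨯ (A : C) ⟶ (A : C))
  comp {A B D} f g := prod.lift prod.fst f ≫ g
  id_comp {A B} f := by
    exact (show ∀ (A B : C) (f : X ⨯ A ⟶ B), prod.lift prod.fst prod.snd ≫ f = f by
      intros; simp) A B f
  comp_id {A B} f := by
    exact (show ∀ (A B : C) (f : X ⨯ A ⟶ B), prod.lift prod.fst f ≫ prod.snd = f by
      intro A B f
      exact prod.lift_snd _ _) A B f
  assoc {A B D E} f g h := by
    exact (show ∀ (A B D E : C) (f : X ⨯ A ⟶ B) (g : X ⨯ B ⟶ D) (h : X ⨯ D ⟶ E),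
        prod.lift prod.fst (prod.lift prod.fst f ≫ g) ≫ h
          = prod.lift prod.fst f ≫ (prod.lift prod.fst g ≫ h) by
      intros A B D E f g h
      rw [← Category.assoc, prod.comp_lift, prod.lift_fst]) A B D E f g h

/-- The cofree functor `F_X : C ⥤ CoKl C X`: the identity on objects, sending
`f : A ⟶ B` to `f ∘ pr₂ : A ⇝ B`. -/
noncomputable def FX (X : C) : C ⥤ CoKl C X where
  obj A := CoKl.mk X A
  map {A B} f := (prod.snd ≫ f : X ⨯ A ⟶ B)
  map_id A := by simp; rfl
  map_comp {A B D} f g := by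
    show prod.snd ≫ f ≫ g = prod.lift prod.fst (prod.snd ≫ f) ≫ (prod.snd ≫ g)
    exact (show ∀ (A B D : C) (f : A ⟶ B) (g : B ⟶ D),
        (prod.snd : X ⨯ A ⟶ A) ≫ f ≫ g
          = prod.lift prod.fst (prod.snd ≫ f) ≫ (prod.snd ≫ g) by
      intro A B D f g
      rw [← Category.assoc (prod.lift _ _) prod.snd g, prod.lift_snd, Category.assoc]) A B D f g

end CoKl

/-- The evaluation morphism `A^Y ⨯ Y ⇝ A` in the coKleisli category: the `C`-morphism
`X ⨯ (A^Y ⨯ Y) ⟶ A` corresponding under the exponential adjunction of `C` to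
`pr₂ : X ⨯ A^Y ⟶ A^Y` (i.e. `assoc⁻¹ ≫ (pr₂ ⨯ id_Y) ≫ ev`). -/
noncomputable def evK {C : Type u} [Category.{v} C] [HasFiniteProducts C] (X : C)
    (Exp : C → C → C) (ev : ∀ Y A : C, Exp Y A ⨯ Y ⟶ A) (Y A : C) :
    (X ⨯ (Exp Y A ⨯ Y) : C) ⟶ A :=
  (prod.associator X (Exp Y A) Y).inv ≫ prod.map prod.snd (𝟙 Y) ≫ ev Y A

/-- Key computation: composing a coKleisli "product map" with `evK` unpacks to the
`C`-level transpose equation. -/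
lemma evK_key {C : Type u} [Category.{v} C] [HasFiniteProducts C] (X : C)
    (Exp : C → C → C) (ev : ∀ Y A : C, Exp Y A ⨯ Y ⟶ A) (Y A B : C)
    (h : (X ⨯ B : C) ⟶ Exp Y A) :
    prod.lift prod.fst
        (prod.lift (prod.map (𝟙 X) prod.fst ≫ h) (prod.snd ≫ prod.snd)) ≫ evK X Exp ev Y A
      = (prod.associator X B Y).inv ≫ prod.map h (𝟙 Y) ≫ ev Y A := by
  simp only [evK, ← Category.assoc]
  congr 1
  rw [show (prod.map (𝟙 X) (prod.fst : (B ⨯ Y : C) ⟶ B)) = prod.lift prod.fst (prod.snd ≫ prod.fst)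
    from by apply Limits.prod.hom_ext <;> simp [prod.lift_fst, prod.lift_snd, prod.lift_fst_assoc, prod.lift_snd_assoc]]
  apply Limits.prod.hom_ext <;> simp [Limits.prod.associator, prod.lift_fst, prod.lift_snd, prod.lift_fst_assoc, prod.lift_snd_assoc]

/-- If `C` is cartesian closed (with chosen exponentials `Exp Y A = A^Y`,
evaluations `ev` and transposes `curry`), then the coKleisli category `C_X` of the reader
comonad is cartesian closed and the cofree functor `F_X` preserves exponentials:
`A^Y` is an exponential of `A` by `Y` in `C_X` with evaluation `evK`, the transpose of
`g : B ⨯ Y ⇝ A` being the `C`-exponential transpose of `g : (X ⨯ B) ⨯ Y ⟶ A`. -/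
theorem coKl_cartesianClosed {C : Type u} [Category.{v} C] [HasFiniteProducts C] (X : C)
    (Exp : C → C → C)
    (ev : ∀ Y A : C, Exp Y A ⨯ Y ⟶ A)
    (curry : ∀ {B Y A : C}, (B ⨯ Y ⟶ A) → (B ⟶ Exp Y A))
    (curry_fac : ∀ {B Y A : C} (g : B ⨯ Y ⟶ A), prod.map (curry g) (𝟙 Y) ≫ ev Y A = g)
    (curry_unique : ∀ {B Y A : C} (g : B ⨯ Y ⟶ A) (h : B ⟶ Exp Y A),
      prod.map h (𝟙 Y) ≫ ev Y A = g → h = curry g) :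
    ∀ (Y A B : C) (g : (X ⨯ (B ⨯ Y) : C) ⟶ A),
      -- the coKleisli transpose `B ⇝ A^Y` of `g`, i.e. the `C`-exponential transpose of
      -- `g : (X ⨯ B) ⨯ Y ⟶ A`, factors `g` through the evaluation `evK` via the
      -- coKleisli product map `(ĝ ⨯ id_Y) : B ⨯ Y ⇝ A^Y ⨯ Y`:
      (prod.lift prod.fst
          (prod.lift (prod.map (𝟙 X) prod.fst ≫ curry ((prod.associator X B Y).hom ≫ g))
            (prod.snd ≫ prod.snd)) ≫ evK X Exp ev Y A = g) ∧
      -- and it is the unique coKleisli morphism with this property: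
      (∀ h : (X ⨯ B : C) ⟶ Exp Y A,
        prod.lift prod.fst
            (prod.lift (prod.map (𝟙 X) prod.fst ≫ h) (prod.snd ≫ prod.snd)) ≫ evK X Exp ev Y A
          = g →
        h = curry ((prod.associator X B Y).hom ≫ g)) ∧
      -- moreover `F_X` preserves exponential transposes (hence exponentials):
      (∀ f : (B ⨯ Y : C) ⟶ A,
        curry ((prod.associator X B Y).hom ≫ (prod.snd ≫ f)) = prod.snd ≫ curry f) := by
  intro Y A B g
  refine ⟨?_, ?_, ?_⟩
  · rw [evK_key, curry_fac, Iso.inv_hom_id_assoc]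
  · intro h hh
    rw [evK_key] at hh
    apply curry_unique
    rw [← hh, Iso.hom_inv_id_assoc]
  · intro f
    refine (curry_unique _ _ ?_).symm
    rw [prod.map_comp_id, Category.assoc, curry_fac]
    rw [← Category.assoc]
    congr 1
    apply Limits.prod.hom_ext <;> simp [Limits.prod.associator, prod.lift_fst, prod.lift_snd, prod.lift_fst_assoc, prod.lift_snd_assoc]
end

section
/- Let P : Cᵒᵖ → Pos be a primary doctrine, X an object of C and φ ∈ P(X). Then P_(X,φ) is a primary doctrine and (F_X, 𝔣) is a primary morphism: (i) for each object A the poset P(X×A)_{↓P(pr₁)(φ)} has binary meets, computed as in P(X×A), and top element P(pr₁)(φ); (ii) these meets and top elements are natural, i.e., every reindexing P_(X,φ)(g) for g : A ⇝ B preserves binary meets and sends P(pr₁)(φ) ∈ P(X×B) to P(pr₁)(φ) ∈ P(X×A); (iii) each component 𝔣_A : P(A) → P_(X,φ)(A) preserves binary meets and sends the top of P(A) to P(pr₁)(φ). -/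
open CategoryTheory CategoryTheory.Limits

universe w w' v u v' u'

/-- `P_(X,φ)` is a primary doctrine and `(F_X, 𝔣)` is a primary morphism.
The fiber of `P_(X,φ)` over `A` is the downset `{α ∈ P(X ⨯ A) | α ≤ P(pr₁)(φ)}` and the
reindexing along a coKleisli morphism `g : A ⇝ B` (a `C`-morphism `g : X ⨯ A ⟶ B`) is the
restriction of `P(⟨pr₁, g⟩)`. -/
theorem pXphi_primary {C : Type u} [Category.{v} C] [HasFiniteProducts C]
    (P : PrimaryDoctrine.{w} C) (X : C) (φ : P.obj X) :
    -- (i) each fiber has binary meets, computed as in `P(X ⨯ A)`, …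
    (∀ (A : C) (α β : P.obj (X ⨯ A)), α ≤ P.map prod.fst φ → β ≤ P.map prod.fst φ →
      α ⊓ β ≤ P.map prod.fst φ) ∧
    -- … and top element `P(pr₁)(φ)`
    (∀ (A : C) (α : P.obj (X ⨯ A)), α ≤ P.map prod.fst φ → α ≤ P.map prod.fst φ) ∧
    -- (ii) the reindexings of `P_(X,φ)` are well defined on the fibers, preserve binary
    -- meets and send the top element to the top element
    (∀ (A B : C) (g : (X ⨯ A : C) ⟶ B) (α : P.obj (X ⨯ B)), α ≤ P.map prod.fst φ →
      P.map (prod.lift prod.fst g) α ≤ P.map prod.fst φ) ∧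
    (∀ (A B : C) (g : (X ⨯ A : C) ⟶ B) (α β : P.obj (X ⨯ B)),
      P.map (prod.lift prod.fst g) (α ⊓ β)
        = P.map (prod.lift prod.fst g) α ⊓ P.map (prod.lift prod.fst g) β) ∧
    (∀ (A B : C) (g : (X ⨯ A : C) ⟶ B),
      P.map (prod.lift prod.fst g) (P.map (prod.fst : X ⨯ B ⟶ X) φ)
        = P.map (prod.fst : X ⨯ A ⟶ X) φ) ∧
    -- (iii) each component `𝔣_A` preserves binary meets and sends `⊤` to `P(pr₁)(φ)`
    (∀ (A : C) (α β : P.obj A), P.frak φ A (α ⊓ β) = P.frak φ A α ⊓ P.frak φ A β) ∧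
    (∀ A : C, P.frak φ A (⊤ : P.obj A) = P.map (prod.fst : X ⨯ A ⟶ X) φ) := by
  have mono : ∀ {A B : C} (f : A ⟶ B) (α β : P.obj B), α ≤ β → P.map f α ≤ P.map f β := by
    intro A B f α β h
    have : α ⊓ β = α := inf_eq_left.mpr h
    have h2 : P.map f α ⊓ P.map f β = P.map f α := by rw [← P.map_inf, this]
    exact inf_eq_left.mp h2
  refine ⟨fun A α β hα _ => le_trans inf_le_left hα,
    fun A α h => h, ?_, fun A B g α β => P.map_inf _ _ _, ?_, ?_, ?_⟩
  · intro A B g α h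
    have := mono (prod.lift prod.fst g) α (P.map prod.fst φ) h
    rwa [← P.map_comp, prod.lift_fst] at this
  · intro A B g
    rw [← P.map_comp, prod.lift_fst]
  · intro A α β
    simp only [PrimaryDoctrine.frak, P.map_inf]
    rw [inf_inf_distrib_left]
  · intro A
    simp [PrimaryDoctrine.frak, P.map_top]
end

section
/- Let P : Cᵒᵖ → Pos be an elementary doctrine, X an object of C and φ ∈ P(X). For each object A set δ^{X,φ}_A := P(pr₁)(φ) ∧ P(⟨pr₂,pr₃⟩)(δ_A) ∈ P_(X,φ)(A×A), where δ_A ∈ P(A×A) is the fibered equality of P and the projections are from X×A×A. Then P_(X,φ) is an elementary doctrine with fibered equalities δ^{X,φ}_A, i.e.: (1) the top of P_(X,φ)(A) is ≤ the reindexing of δ^{X,φ}_A along the diagonal of A in C_X; (2) for every α ∈ P_(X,φ)(A), the reindexing of α along the first projection, met with δ^{X,φ}_A, is ≤ the reindexing of α along the second projection; (3) δ^{X,φ}_A ⊠ δ^{X,φ}_B ≤ δ^{X,φ}_{A×B}. Moreover (F_X, 𝔣) is an elementary morphism: 𝔣_{A×A}(δ_A) = δ^{X,φ}_A for every A. -/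
open CategoryTheory CategoryTheory.Limits

universe w w' v u v' u'

/-- `P` is an elementary doctrine with fibered equalities `δ`. -/
def PrimaryDoctrine.IsElementaryWith {C : Type u} [Category.{v} C] [HasFiniteProducts C]
    (P : PrimaryDoctrine.{w} C) (δ : ∀ A : C, P.obj (A ⨯ A)) : Prop :=
  (∀ A : C, (⊤ : P.obj A) ≤ P.map (prod.lift (𝟙 A) (𝟙 A)) (δ A)) ∧
  (∀ (A : C) (α : P.obj A),
    P.map (prod.fst : A ⨯ A ⟶ A) α ⊓ δ A ≤ P.map (prod.snd : A ⨯ A ⟶ A) α) ∧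
  (∀ A B : C,
    P.map (prod.map prod.fst prod.fst : (A ⨯ B) ⨯ (A ⨯ B) ⟶ A ⨯ A) (δ A)
        ⊓ P.map (prod.map prod.snd prod.snd : (A ⨯ B) ⨯ (A ⨯ B) ⟶ B ⨯ B) (δ B)
      ≤ δ (A ⨯ B))

/-- The fibered equality `δ^{X,φ}_A = P(pr₁)(φ) ⊓ P(⟨pr₂,pr₃⟩)(δ_A)` of `P_(X,φ)`. -/
noncomputable def PrimaryDoctrine.deltaX {C : Type u} [Category.{v} C] [HasFiniteProducts C]
    (P : PrimaryDoctrine.{w} C) {X : C} (φ : P.obj X) (δ : ∀ A : C, P.obj (A ⨯ A)) (A : C) :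
    P.obj (X ⨯ (A ⨯ A)) :=
  P.map prod.fst φ ⊓ P.map prod.snd (δ A)


lemma PrimaryDoctrine.map_mono {C : Type u} [Category.{v} C]
    (P : PrimaryDoctrine.{w} C) {A B : C} (f : A ⟶ B) {a b : P.obj B} (h : a ≤ b) :
    P.map f a ≤ P.map f b := by
  have : a ⊓ b = a := inf_eq_left.mpr h
  calc P.map f a = P.map f (a ⊓ b) := by rw [this]
    _ = P.map f a ⊓ P.map f b := P.map_inf f a b
    _ ≤ P.map f b := inf_le_right

/-- If `P` is elementary, then `P_(X,φ)` is elementary with fibered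
equalities `δ^{X,φ}_A` and `(F_X, 𝔣)` is an elementary morphism. The reindexings of
`P_(X,φ)` along the relevant morphisms of `C_X` (the diagonal of `A`, the two projections
`A ⨯ A ⇝ A`, and `⟨pr₁,pr₃⟩, ⟨pr₂,pr₄⟩`) are spelled out as the restrictions of
`P(⟨pr₁, g⟩)` for the corresponding `C`-morphisms `g`. -/
theorem pXphi_elementary {C : Type u} [Category.{v} C] [HasFiniteProducts C]
    (P : PrimaryDoctrine.{w} C) (X : C) (φ : P.obj X)
    (δ : ∀ A : C, P.obj (A ⨯ A)) (hδ : P.IsElementaryWith δ) :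
    -- `δ^{X,φ}_A` belongs to the fiber `P_(X,φ)(A ⨯ A)`
    (∀ A : C, P.deltaX φ δ A ≤ P.map prod.fst φ) ∧
    -- (1) `⊤ ≤` the reindexing of `δ^{X,φ}_A` along the diagonal of `A` in `C_X`
    (∀ A : C,
      P.map (prod.fst : X ⨯ A ⟶ X) φ
        ≤ P.map (prod.lift prod.fst (prod.snd ≫ prod.lift (𝟙 A) (𝟙 A)))
            (P.deltaX φ δ A)) ∧
    -- (2) for `α` in the fiber over `A`, `P(pr₁)(α) ⊓ δ^{X,φ}_A ≤ P(pr₂)(α)`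
    (∀ (A : C) (α : P.obj (X ⨯ A)), α ≤ P.map prod.fst φ →
      P.map (prod.lift prod.fst (prod.snd ≫ prod.fst)) α ⊓ P.deltaX φ δ A
        ≤ P.map (prod.lift prod.fst (prod.snd ≫ prod.snd)) α) ∧
    -- (3) `δ^{X,φ}_A ⊠ δ^{X,φ}_B ≤ δ^{X,φ}_{A ⨯ B}`
    (∀ A B : C,
      P.map (prod.lift prod.fst (prod.snd ≫ prod.map prod.fst prod.fst)) (P.deltaX φ δ A)
          ⊓ P.map (prod.lift prod.fst (prod.snd ≫ prod.map prod.snd prod.snd))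
              (P.deltaX φ δ B)
        ≤ P.deltaX φ δ (A ⨯ B)) ∧
    -- `(F_X, 𝔣)` is elementary: `𝔣_{A ⨯ A}(δ_A) = δ^{X,φ}_A`
    (∀ A : C, P.frak φ (A ⨯ A) (δ A) = P.deltaX φ δ A) := by
  obtain ⟨h1, h2, h3⟩ := hδ
  refine ⟨fun A => inf_le_left, ?_, ?_, ?_, fun A => rfl⟩
  · intro A
    rw [PrimaryDoctrine.deltaX, P.map_inf, ← P.map_comp, ← P.map_comp,
      prod.lift_fst, prod.lift_snd, P.map_comp]
    have : (⊤ : P.obj (X ⨯ A)) ≤ P.map prod.snd (P.map (prod.lift (𝟙 A) (𝟙 A)) (δ A)) := by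
      calc (⊤ : P.obj (X ⨯ A)) = P.map prod.snd ⊤ := (P.map_top _).symm
        _ ≤ _ := P.map_mono _ (h1 A)
    exact le_inf le_rfl (le_trans le_top this)
  · intro A α _
    set F : X ⨯ (A ⨯ A) ⟶ (X ⨯ A) ⨯ (X ⨯ A) :=
      prod.lift (prod.lift prod.fst (prod.snd ≫ prod.fst))
        (prod.lift prod.fst (prod.snd ≫ prod.snd)) with hF
    have key : P.map F (P.map (prod.fst : (X ⨯ A) ⨯ (X ⨯ A) ⟶ X ⨯ A) α ⊓ δ (X ⨯ A))
        ≤ P.map F (P.map (prod.snd : (X ⨯ A) ⨯ (X ⨯ A) ⟶ X ⨯ A) α) :=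
      P.map_mono F (h2 (X ⨯ A) α)
    rw [P.map_inf, ← P.map_comp, ← P.map_comp, hF, prod.lift_fst, prod.lift_snd] at key
    refine le_trans (le_trans ?_ key) le_rfl
    refine inf_le_inf le_rfl ?_
    -- show δ^{X,φ}_A ≤ P.map F (δ (X ⨯ A))
    have step : P.map F (P.map (prod.map prod.fst prod.fst) (δ X)
          ⊓ P.map (prod.map prod.snd prod.snd) (δ A)) ≤ P.map F (δ (X ⨯ A)) :=
      P.map_mono F (h3 X A)
    rw [P.map_inf, ← P.map_comp, ← P.map_comp] at step
    have e1 : F ≫ prod.map prod.fst prod.fst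
        = (prod.fst : X ⨯ (A ⨯ A) ⟶ X) ≫ prod.lift (𝟙 X) (𝟙 X) := by
      apply Limits.prod.hom_ext <;> simp [hF, -prod.lift_map]
      · erw [prod.lift_fst_assoc, prod.lift_fst, prod.lift_fst]
      · erw [prod.lift_snd_assoc, prod.lift_fst, prod.lift_snd]
    have e2 : F ≫ prod.map prod.snd prod.snd = (prod.snd : X ⨯ (A ⨯ A) ⟶ A ⨯ A) := by
      apply Limits.prod.hom_ext <;> simp [hF, -prod.lift_map]
      · erw [prod.lift_fst_assoc, prod.lift_snd]
      · erw [prod.lift_snd_assoc, prod.lift_snd]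
    rw [e1, e2, P.map_comp] at step
    refine le_trans ?_ step
    refine le_inf ?_ inf_le_right
    calc P.deltaX φ δ A ≤ ⊤ := le_top
      _ = P.map prod.fst (⊤ : P.obj X) := (P.map_top _).symm
      _ ≤ _ := P.map_mono _ (h1 X)
  · intro A B
    simp only [PrimaryDoctrine.deltaX, P.map_inf, ← P.map_comp, prod.lift_fst, prod.lift_snd]
    have key : P.map (prod.snd : X ⨯ ((A ⨯ B) ⨯ (A ⨯ B)) ⟶ _)
        (P.map (prod.map prod.fst prod.fst) (δ A) ⊓ P.map (prod.map prod.snd prod.snd) (δ B))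
        ≤ P.map prod.snd (δ (A ⨯ B)) := P.map_mono _ (h3 A B)
    rw [P.map_inf, ← P.map_comp, ← P.map_comp] at key
    refine le_inf ?_ (le_trans ?_ key)
    · exact le_trans inf_le_left inf_le_left
    · exact inf_le_inf inf_le_right inf_le_right
end

section
/- Let P : Cᵒᵖ → Pos be an implicational doctrine, X an object of C and φ ∈ P(X). For α, β ∈ P_(X,φ)(A) define α ⇒ β := (α → β) ∧ P(pr₁)(φ), where → is the Heyting implication of P(X×A). Then: (i) each fiber P_(X,φ)(A) is cartesian closed with implication ⇒ (for all α, β, γ ≤ P(pr₁)(φ): α ∧ β ≤ γ if and only if α ≤ β ⇒ γ); (ii) ⇒ is natural, i.e., P_(X,φ)(g)(α ⇒ β) = P_(X,φ)(g)(α) ⇒ P_(X,φ)(g)(β) for every g : A ⇝ B in C_X; (iii) (F_X, 𝔣) preserves implication: 𝔣_A(α → β) = 𝔣_A(α) ⇒ 𝔣_A(β) for all α, β ∈ P(A). In particular, in any cartesian closed meet-semilattice the identity ((x ∧ a) → (x ∧ b)) ∧ x = x ∧ (a → b) holds. -/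
open CategoryTheory CategoryTheory.Limits

universe w w' v u v' u'

/-- Implicational structure on a primary doctrine: every fiber is a cartesian closed poset
(with implication `himp`) and every reindexing preserves the implication. -/
structure PrimaryDoctrine.ImpData {C : Type u} [Category.{v} C]
    (P : PrimaryDoctrine.{w} C) where
  himp : ∀ A : C, P.obj A → P.obj A → P.obj A
  adj : ∀ {A : C} (a b c : P.obj A), a ⊓ b ≤ c ↔ a ≤ himp A b c
  natural : ∀ {A B : C} (f : A ⟶ B) (a b : P.obj B),
      P.map f (himp B a b) = himp A (P.map f a) (P.map f b)


private lemma ccKey {L : Type*} [SemilatticeInf L] (h : L → L → L)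
    (adj : ∀ a b c : L, a ⊓ b ≤ c ↔ a ≤ h b c) (x a b : L) :
    h (x ⊓ a) (x ⊓ b) ⊓ x = x ⊓ h a b := by
  apply le_antisymm
  · refine le_inf inf_le_right ?_
    rw [← adj]
    have : h (x ⊓ a) (x ⊓ b) ⊓ x ⊓ a = h (x ⊓ a) (x ⊓ b) ⊓ (x ⊓ a) := by
      rw [inf_assoc]
    rw [this]
    exact le_trans ((adj _ _ _).mpr le_rfl) inf_le_right
  · refine le_inf ?_ inf_le_left
    rw [← adj]
    refine le_inf (le_trans inf_le_left inf_le_left) ?_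
    have h1 : x ⊓ h a b ⊓ (x ⊓ a) ≤ h a b ⊓ a :=
      inf_le_inf inf_le_right inf_le_right
    exact le_trans h1 ((adj _ _ _).mpr le_rfl)

/-- If `P` is implicational then so is `P_(X,φ)`, with implication
`α ⇒ β := (α → β) ⊓ P(pr₁)(φ)`, and `(F_X, 𝔣)` preserves the implication. -/
theorem pXphi_implicational {C : Type u} [Category.{v} C] [HasFiniteProducts C]
    (P : PrimaryDoctrine.{w} C) (X : C) (φ : P.obj X) (I : P.ImpData) :
    -- `α ⇒ β` lands in the downset
    (∀ (A : C) (α β : P.obj (X ⨯ A)),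
      I.himp (X ⨯ A) α β ⊓ P.map prod.fst φ ≤ P.map prod.fst φ) ∧
    -- (i) each fiber of `P_(X,φ)` is cartesian closed with implication `⇒`
    (∀ (A : C) (α β γ : P.obj (X ⨯ A)),
      α ≤ P.map prod.fst φ → β ≤ P.map prod.fst φ → γ ≤ P.map prod.fst φ →
      (α ⊓ β ≤ γ ↔ α ≤ I.himp (X ⨯ A) β γ ⊓ P.map prod.fst φ)) ∧
    -- (ii) `⇒` is natural w.r.t. the reindexings of `P_(X,φ)`
    (∀ (A B : C) (g : (X ⨯ A : C) ⟶ B) (α β : P.obj (X ⨯ B)),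
      α ≤ P.map prod.fst φ → β ≤ P.map prod.fst φ →
      P.map (prod.lift prod.fst g) (I.himp (X ⨯ B) α β ⊓ P.map prod.fst φ)
        = I.himp (X ⨯ A) (P.map (prod.lift prod.fst g) α) (P.map (prod.lift prod.fst g) β)
            ⊓ P.map prod.fst φ) ∧
    -- (iii) `(F_X, 𝔣)` preserves the implication
    (∀ (A : C) (α β : P.obj A),
      P.frak φ A (I.himp A α β)
        = I.himp (X ⨯ A) (P.frak φ A α) (P.frak φ A β) ⊓ P.map prod.fst φ) ∧
    -- in particular, in any cartesian closed meet-semilattice,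
    -- `((x ⊓ a) → (x ⊓ b)) ⊓ x = x ⊓ (a → b)`
    (∀ (L : Type w') [SemilatticeInf L] (h : L → L → L),
      (∀ a b c : L, a ⊓ b ≤ c ↔ a ≤ h b c) →
      ∀ x a b : L, h (x ⊓ a) (x ⊓ b) ⊓ x = x ⊓ h a b) := by
  refine ⟨fun A α β => inf_le_right, fun A α β γ ha hb hc => ?_,
    fun A B g α β ha hb => ?_, fun A α β => ?_,
    fun L _ h adj x a b => ccKey h adj x a b⟩
  · constructor
    · intro hle
      exact le_inf ((I.adj _ _ _).mp hle) ha
    · intro hle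
      exact (I.adj _ _ _).mpr (le_trans hle inf_le_left)
  · have hfst : prod.lift prod.fst g ≫ prod.fst = (prod.fst : (X ⨯ A : C) ⟶ X) :=
      prod.lift_fst _ _
    have key : P.map (prod.lift prod.fst g) (P.map prod.fst φ) = P.map prod.fst φ := by
      rw [← P.map_comp, hfst]
    rw [P.map_inf, I.natural, key]
  · simp only [PrimaryDoctrine.frak, I.natural]
    rw [ccKey (I.himp (X ⨯ A)) (fun a b c => I.adj a b c)]
end

section
/- Let P : Cᵒᵖ → Pos be a primary doctrine that is bounded, X an object of C and φ ∈ P(X). Then P_(X,φ) is bounded: each fiber P(X×A)_{↓P(pr₁)(φ)} has top element P(pr₁)(φ) and bottom element ⊥_{X×A} (the bottom of P(X×A)), both natural with respect to the reindexings of P_(X,φ); and (F_X, 𝔣) preserves the bottom element: 𝔣_A(⊥_A) = ⊥_{X×A}. -/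
open CategoryTheory CategoryTheory.Limits

universe w w' v u v' u'

/-- If the primary doctrine `P` is bounded (every fiber has a bottom
element, preserved by all reindexings), then `P_(X,φ)` is bounded, with top `P(pr₁)(φ)` and
bottom `⊥_{X ⨯ A}` in the fiber over `A`, both natural, and `(F_X, 𝔣)` preserves `⊥`. -/
theorem pXphi_bounded {C : Type u} [Category.{v} C] [HasFiniteProducts C]
    (P : PrimaryDoctrine.{w} C) [∀ A : C, OrderBot (P.obj A)]
    (hbot : ∀ {A B : C} (f : A ⟶ B), P.map f (⊥ : P.obj B) = ⊥)
    (X : C) (φ : P.obj X) :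
    -- the bottom of `P(X ⨯ A)` lies in the fiber of `P_(X,φ)` over `A` and is its bottom
    (∀ A : C, (⊥ : P.obj (X ⨯ A)) ≤ P.map prod.fst φ) ∧
    (∀ (A : C) (α : P.obj (X ⨯ A)), α ≤ P.map prod.fst φ → (⊥ : P.obj (X ⨯ A)) ≤ α) ∧
    -- `P(pr₁)(φ)` is the top of the fiber
    (∀ (A : C) (α : P.obj (X ⨯ A)), α ≤ P.map prod.fst φ → α ≤ P.map prod.fst φ) ∧
    -- both are natural w.r.t. the reindexings of `P_(X,φ)`
    (∀ (A B : C) (g : (X ⨯ A : C) ⟶ B),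
      P.map (prod.lift prod.fst g) (P.map (prod.fst : X ⨯ B ⟶ X) φ)
        = P.map (prod.fst : X ⨯ A ⟶ X) φ) ∧
    (∀ (A B : C) (g : (X ⨯ A : C) ⟶ B),
      P.map (prod.lift prod.fst g) (⊥ : P.obj (X ⨯ B)) = (⊥ : P.obj (X ⨯ A))) ∧
    -- `(F_X, 𝔣)` preserves the bottom element
    (∀ A : C, P.frak φ A (⊥ : P.obj A) = (⊥ : P.obj (X ⨯ A))) := by
  refine ⟨fun A => bot_le, fun A α _ => bot_le, fun A α h => h, ?_, ?_, ?_⟩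
  · intro A B g
    rw [← P.map_comp, prod.lift_fst]
  · intro A B g
    exact hbot _
  · intro A
    simp [PrimaryDoctrine.frak, hbot]
end

section
/- Let P : Cᵒᵖ → Pos be a primary doctrine with binary joins, X an object of C and φ ∈ P(X). Then P_(X,φ) has binary joins: for α, β ∈ P(X×A)_{↓P(pr₁)(φ)} their join in P_(X,φ)(A) is the join α ∨ β computed in P(X×A), and these joins are preserved by the reindexings of P_(X,φ). If moreover every fiber of P is a distributive lattice, then (F_X, 𝔣) preserves binary joins: 𝔣_A(α ∨ β) = 𝔣_A(α) ∨ 𝔣_A(β) for all α, β ∈ P(A). -/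
open CategoryTheory CategoryTheory.Limits

universe w w' v u v' u'

/-- If the primary doctrine `P` has binary joins (natural in reindexing),
then `P_(X,φ)` has binary joins, computed as in `P(X ⨯ A)`; if moreover every fiber of `P`
is a distributive lattice, then `(F_X, 𝔣)` preserves binary joins. -/
theorem pXphi_joins {C : Type u} [Category.{v} C] [HasFiniteProducts C]
    (P : PrimaryDoctrine.{w} C)
    (sup : ∀ A : C, P.obj A → P.obj A → P.obj A)
    (le_sup_left : ∀ (A : C) (a b : P.obj A), a ≤ sup A a b)
    (le_sup_right : ∀ (A : C) (a b : P.obj A), b ≤ sup A a b)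
    (sup_le : ∀ (A : C) (a b c : P.obj A), a ≤ c → b ≤ c → sup A a b ≤ c)
    (map_sup : ∀ {A B : C} (f : A ⟶ B) (a b : P.obj B),
      P.map f (sup B a b) = sup A (P.map f a) (P.map f b))
    (X : C) (φ : P.obj X) :
    -- the join of two elements of a fiber of `P_(X,φ)`, computed in `P(X ⨯ A)`, lies in
    -- the fiber (and is clearly their join there)
    (∀ (A : C) (α β : P.obj (X ⨯ A)), α ≤ P.map prod.fst φ → β ≤ P.map prod.fst φ →
      sup (X ⨯ A) α β ≤ P.map prod.fst φ) ∧
    -- the reindexings of `P_(X,φ)` preserve binary joins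
    (∀ (A B : C) (g : (X ⨯ A : C) ⟶ B) (α β : P.obj (X ⨯ B)),
      P.map (prod.lift prod.fst g) (sup (X ⨯ B) α β)
        = sup (X ⨯ A) (P.map (prod.lift prod.fst g) α) (P.map (prod.lift prod.fst g) β)) ∧
    -- if every fiber of `P` is a distributive lattice, `(F_X, 𝔣)` preserves binary joins
    ((∀ (A : C) (a b c : P.obj A), a ⊓ sup A b c = sup A (a ⊓ b) (a ⊓ c)) →
      ∀ (A : C) (α β : P.obj A),
        P.frak φ A (sup A α β) = sup (X ⨯ A) (P.frak φ A α) (P.frak φ A β)) := by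
  refine ⟨fun A α β hα hβ => sup_le _ _ _ _ hα hβ, fun A B g α β => map_sup _ _ _,
    fun hdist A α β => ?_⟩
  simp only [PrimaryDoctrine.frak, map_sup, hdist]
end

section
/- Let P : Cᵒᵖ → Pos be a *-autonomous primary doctrine, X an object of C and φ ∈ P(X). For α ∈ P_(X,φ)(A) define ⌉α := ¬α ∧ P(pr₁)(φ). Then P_(X,φ) is *-autonomous with negation ⌉: for all α, β, γ ∈ P(X×A) with α, β, γ ≤ P(pr₁)(φ) one has ⌉⌉α = α and (α ∧ β ≤ ⌉γ if and only if α ≤ ⌉(β ∧ γ)), ⌉ is natural with respect to the reindexings of P_(X,φ), and (F_X, 𝔣) preserves negation: 𝔣_A(¬α) = ⌉𝔣_A(α). In particular, in any *-autonomous meet-semilattice the identity x ∧ ¬a = ¬(x ∧ a) ∧ x holds for all a, x. -/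
open CategoryTheory CategoryTheory.Limits

universe w w' v u v' u'

/-- `*`-autonomous structure on a primary doctrine: each fiber has an involutive
negation satisfying `a ⊓ b ≤ ¬c ↔ a ≤ ¬(b ⊓ c)`, commuting with all reindexings. -/
structure PrimaryDoctrine.StarAutData {C : Type u} [Category.{v} C]
    (P : PrimaryDoctrine.{w} C) where
  neg : ∀ A : C, P.obj A → P.obj A
  neg_neg : ∀ (A : C) (a : P.obj A), neg A (neg A a) = a
  adj : ∀ {A : C} (a b c : P.obj A), a ⊓ b ≤ neg A c ↔ a ≤ neg A (b ⊓ c)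
  natural : ∀ {A B : C} (f : A ⟶ B) (a : P.obj B), P.map f (neg B a) = neg A (P.map f a)


private lemma star_aut_key {L : Type*} [SemilatticeInf L] (n : L → L)
    (hnn : ∀ a : L, n (n a) = a) (hadj : ∀ a b c : L, a ⊓ b ≤ n c ↔ a ≤ n (b ⊓ c)) :
    ∀ a x : L, x ⊓ n a = n (x ⊓ a) ⊓ x := by
  intro a x
  apply le_antisymm
  · exact le_inf ((hadj (x ⊓ n a) x a).mp (inf_le_of_left_le inf_le_right)) inf_le_left
  · exact le_inf inf_le_right ((hadj (n (x ⊓ a)) x a).mpr le_rfl)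

/-- If `P` is a `*`-autonomous primary doctrine, then `P_(X,φ)` is
`*`-autonomous with negation `⌉α := ¬α ⊓ P(pr₁)(φ)`, and `(F_X, 𝔣)` preserves negation. -/
theorem pXphi_starAutonomous {C : Type u} [Category.{v} C] [HasFiniteProducts C]
    (P : PrimaryDoctrine.{w} C) (X : C) (φ : P.obj X) (N : P.StarAutData) :
    -- `⌉` is involutive on each fiber of `P_(X,φ)`
    (∀ (A : C) (α : P.obj (X ⨯ A)), α ≤ P.map prod.fst φ →
      N.neg (X ⨯ A) (N.neg (X ⨯ A) α ⊓ P.map prod.fst φ) ⊓ P.map prod.fst φ = α) ∧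
    -- the `*`-autonomous adjunction holds in each fiber of `P_(X,φ)`
    (∀ (A : C) (α β γ : P.obj (X ⨯ A)),
      α ≤ P.map prod.fst φ → β ≤ P.map prod.fst φ → γ ≤ P.map prod.fst φ →
      (α ⊓ β ≤ N.neg (X ⨯ A) γ ⊓ P.map prod.fst φ ↔
        α ≤ N.neg (X ⨯ A) (β ⊓ γ) ⊓ P.map prod.fst φ)) ∧
    -- `⌉` is natural w.r.t. the reindexings of `P_(X,φ)`
    (∀ (A B : C) (g : (X ⨯ A : C) ⟶ B) (α : P.obj (X ⨯ B)), α ≤ P.map prod.fst φ →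
      P.map (prod.lift prod.fst g) (N.neg (X ⨯ B) α ⊓ P.map prod.fst φ)
        = N.neg (X ⨯ A) (P.map (prod.lift prod.fst g) α) ⊓ P.map prod.fst φ) ∧
    -- `(F_X, 𝔣)` preserves the negation
    (∀ (A : C) (α : P.obj A),
      P.frak φ A (N.neg A α) = N.neg (X ⨯ A) (P.frak φ A α) ⊓ P.map prod.fst φ) ∧
    -- in particular, in any `*`-autonomous meet-semilattice, `x ⊓ ¬a = ¬(x ⊓ a) ⊓ x`
    (∀ (L : Type w') [SemilatticeInf L] (n : L → L),
      (∀ a : L, n (n a) = a) → (∀ a b c : L, a ⊓ b ≤ n c ↔ a ≤ n (b ⊓ c)) →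
      ∀ a x : L, x ⊓ n a = n (x ⊓ a) ⊓ x) := by
  refine ⟨?_, ?_, ?_, ?_, ?_⟩
  · intro A α hα
    have h := star_aut_key (N.neg (X ⨯ A)) (N.neg_neg _) (fun a b c => N.adj a b c)
      (N.neg (X ⨯ A) α) (P.map prod.fst φ)
    rw [N.neg_neg] at h
    rw [inf_comm (P.map prod.fst φ) (N.neg (X ⨯ A) α)] at h
    rw [← h, inf_eq_right.mpr hα]
  · intro A α β γ hα hβ hγ
    constructor
    · intro h
      exact le_inf ((N.adj α β γ).mp (h.trans inf_le_left)) hα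
    · intro h
      exact le_inf ((N.adj α β γ).mpr (h.trans inf_le_left)) (inf_le_of_left_le hα)
  · intro A B g α _
    rw [P.map_inf, N.natural, ← P.map_comp, prod.lift_fst]
  · intro A α
    have h := star_aut_key (N.neg (X ⨯ A)) (N.neg_neg _) (fun a b c => N.adj a b c)
      (P.map prod.snd α) (P.map prod.fst φ)
    unfold PrimaryDoctrine.frak
    rw [N.natural]
    exact h
  · intro L _ n hnn hadj
    exact star_aut_key n hnn hadj
end
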